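/- arXiv:1501.04904 — 2 statements merged into one kernel-verified Lean document; each statement's English description precedes it below -/
import Mathlib

section
/- Let q0 be a prime power and q = q0², and let M = {a ∈ 𝔽_q : a^{q0} + a = 0}. Then |M| = q0; for every a ∈ 𝔽_q \ M the set {b ∈ 𝔽_q : b^{q0+1} = a^{q0} + a} has exactly q0 + 1 elements; and for every a ∈ M that set equals {0}. In particular, the number of affine points (a,b) of the Hermitian curve with a ∉ M equals q0³ - q0. -/
/-!
Write `q = q0`. The trace `x ↦ x ^ q + x` is additive with kernel `M`, and it lands in the
fixed field `{c | c ^ q = c}`; both sets are root sets of polynomials of degree `q`, so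
`|M| · |image| = q²` forces `|M| = q` and every fixed point to be a trace. Likewise the norm
`u ↦ u ^ (q + 1)` on the cyclic group `Fˣ` of order `q² - 1 = (q + 1)(q - 1)` has kernel of
size at most `q + 1` and lands in `{u | u ^ (q - 1) = 1}` of size at most `q - 1`, so each
nonzero fixed point has exactly `q + 1` preimages. Summing over the `q² - q` values `a ∉ M`
gives `(q² - q)(q + 1) = q³ - q` points.
-/

open Finset Polynomial

@[to_additive AddMonoidHom.card_fiber_eq_of_card_mul_le]
theorem MonoidHom.card_fiber_eq_of_card_mul_le {G H : Type*} [Group G] [Fintype G] [Group H]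
    [DecidableEq H] (f : G →* H) {S : Finset H} {n : ℕ} (hf : ∀ g, f g ∈ S)
    (hker : #{g | f g = 1} ≤ n) (hcard : #S * n ≤ Fintype.card G) {y : H} (hy : y ∈ S) :
    #{g | f g = y} = n := by
  have hle : ∀ z ∈ S, #{g | f g = z} ≤ n := by
    intro z _
    by_cases hz : z ∈ Set.range f
    · rwa [card_fiber_eq_of_mem_range f hz ⟨1, map_one f⟩]
    · simp only [Set.mem_range, not_exists] at hz
      simp [hz]
  have hsum : ∑ z ∈ S, #{g | f g = z} = ∑ _z ∈ S, n := by
    refine le_antisymm (sum_le_sum hle) ?_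
    rwa [sum_const, smul_eq_mul, ← card_eq_sum_card_fiberwise fun g _ => hf g, card_univ]
  exact (sum_eq_sum_iff_of_le hle).1 hsum y hy

theorem card_filter_prod_and {α β : Type*} [Fintype α] [Fintype β] (P : α → β → Prop)
    (Q : α → Prop) [∀ a b, Decidable (P a b)] [DecidablePred Q] :
    #{x : α × β | P x.1 x.2 ∧ Q x.1} = ∑ a with Q a, #{b | P a b} := by
  simp only [card_filter, Fintype.sum_prod_type, sum_filter]
  refine sum_congr rfl fun a _ => ?_
  by_cases ha : Q a <;> simp [ha]

theorem card_filter_pow_eq_units {K : Type*} [GroupWithZero K] [Fintype K] [DecidableEq K]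
    {n : ℕ} (hn : n ≠ 0) (u : Kˣ) : #{x : K | x ^ n = u} = #{v : Kˣ | v ^ n = u} := by
  symm
  refine card_bij (fun v _ => (v : K)) ?_ (fun v _ w _ h => Units.ext h) ?_
  · intro v hv
    simpa [Units.ext_iff] using hv
  · intro x hx
    have hx0 : x ≠ 0 := by
      rintro rfl
      simp only [mem_filter, mem_univ, zero_pow hn, true_and] at hx
      exact u.ne_zero hx.symm
    refine ⟨Units.mk0 x hx0, ?_, rfl⟩
    simp_all [Units.ext_iff]

section FrobeniusTrace

variable (F : Type*) [CommSemiring F] (p k : ℕ) [ExpChar F p]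

/-- For `Fintype.card F = (p ^ k) ^ 2` this is the trace of `F` over its subfield of order
`p ^ k`. -/
def frobeniusTrace : F →+ F :=
  (iterateFrobenius F p k).toAddMonoidHom + AddMonoidHom.id F

variable {F p k}

theorem frobeniusTrace_apply (x : F) : frobeniusTrace F p k x = x ^ p ^ k + x := rfl

end FrobeniusTrace

section FiniteField

variable {F : Type*} [Field F] [Fintype F]

theorem card_filter_pow_add_mul_eq_zero_le [DecidableEq F] {n : ℕ} (hn : 2 ≤ n) (u : F) :
    #{x : F | x ^ n + u * x = 0} ≤ n := by
  have hdeg : (X ^ n + C u * X : F[X]).natDegree = n := by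
    rw [natDegree_add_eq_left_of_natDegree_lt] <;> simp only [natDegree_X_pow]
    exact (natDegree_C_mul_le u X).trans_lt (by rw [natDegree_X]; omega)
  have hne : (X ^ n + C u * X : F[X]) ≠ 0 := by
    rintro h
    rw [h, natDegree_zero] at hdeg
    omega
  refine hdeg ▸ card_le_degree_of_subset_roots fun x hx => ?_
  simp_all [mem_roots hne]

theorem two_le_of_card_eq_sq {q : ℕ} (hF : Fintype.card F = q ^ 2) : 2 ≤ q := by
  have := hF ▸ Fintype.one_lt_card (α := F)
  nlinarith

theorem pow_pow_of_card_eq_sq {q : ℕ} (hF : Fintype.card F = q ^ 2) (x : F) :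
    (x ^ q) ^ q = x := by
  rw [← pow_mul, ← sq, ← hF, FiniteField.pow_card]

theorem card_filter_pow_succ_eq [DecidableEq F] {q : ℕ} (hF : Fintype.card F = q ^ 2) {c : F}
    (hc0 : c ≠ 0) (hc : c ^ q = c) : #{x : F | x ^ (q + 1) = c} = q + 1 := by
  have hq := two_le_of_card_eq_sq hF
  have hcardU : Fintype.card Fˣ = (q - 1) * (q + 1) := by
    rw [Fintype.card_units, hF, mul_comm]
    simpa using Nat.sq_sub_sq q 1
  have hc1 : c ^ (q - 1) = 1 := by
    rw [← mul_left_inj' hc0, ← pow_succ, Nat.sub_add_cancel (by omega), hc, one_mul]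
  have hunits := card_filter_pow_eq_units (by omega : q + 1 ≠ 0) (Units.mk0 c hc0)
  rw [Units.val_mk0] at hunits
  rw [hunits]
  refine (powMonoidHom (q + 1) : Fˣ →* Fˣ).card_fiber_eq_of_card_mul_le
    (S := {u | u ^ (q - 1) = 1}) (fun u => ?_) (IsCyclic.card_pow_eq_one_le (by omega)) ?_ ?_
  · simp only [powMonoidHom_apply, mem_filter, mem_univ, true_and]
    rw [← pow_mul, mul_comm, ← hcardU, pow_card_eq_one]
  · rw [hcardU]
    exact Nat.mul_le_mul_right _ (IsCyclic.card_pow_eq_one_le (by omega))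
  · simpa [Units.ext_iff] using hc1

variable {p k : ℕ} [ExpChar F p]

theorem frobeniusTrace_pow_eq_self (hF : Fintype.card F = (p ^ k) ^ 2) (x : F) :
    frobeniusTrace F p k x ^ p ^ k = frobeniusTrace F p k x := by
  rw [frobeniusTrace_apply, add_pow_expChar_pow, pow_pow_of_card_eq_sq hF, add_comm]

theorem card_filter_pow_add_self_eq_zero [DecidableEq F] (hF : Fintype.card F = (p ^ k) ^ 2) :
    #{x : F | x ^ p ^ k + x = 0} = p ^ k := by
  have hq := two_le_of_card_eq_sq hF
  have hker : #{x : F | x ^ p ^ k + x = 0} ≤ p ^ k := by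
    simpa using card_filter_pow_add_mul_eq_zero_le hq (1 : F)
  have hfixed : #{x : F | x ^ p ^ k = x} ≤ p ^ k := by
    simpa [← sub_eq_add_neg, sub_eq_zero] using card_filter_pow_add_mul_eq_zero_le hq (-1 : F)
  exact (frobeniusTrace F p k).card_fiber_eq_of_card_mul_le (S := {x | x ^ p ^ k = x})
    (fun x => by simpa using frobeniusTrace_pow_eq_self hF x) hker
    (by rw [hF, sq]; exact Nat.mul_le_mul_right _ hfixed)
    (y := 0) (by simp [zero_pow (by omega : p ^ k ≠ 0)])

end FiniteField

/-- Fibers of the projection `(x,y) ↦ x` of the Hermitian curve `x^{q0} + x = y^{q0+1}`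
over `𝔽_{q0²}`: the set `M = {a : a^{q0} + a = 0}` of fully ramified points has size `q0`;
for `a ∉ M` the fiber `{b : b^{q0+1} = a^{q0} + a}` has exactly `q0 + 1` elements; for
`a ∈ M` that fiber is `{0}`; and the number of affine points `(a,b)` of the curve with
`a ∉ M` equals `q0³ - q0`. -/
theorem hermitian_x_projection_fibers
    (q0 : ℕ) (hq0 : IsPrimePow q0)
    (F : Type*) [Field F] [Fintype F] [DecidableEq F] (hF : Fintype.card F = q0 ^ 2)
    (M : Finset F) (hM : M = Finset.univ.filter fun a : F => a ^ q0 + a = 0) :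
    M.card = q0 ∧
    (∀ a : F, a ∉ M →
      (Finset.univ.filter fun b : F => b ^ (q0 + 1) = a ^ q0 + a).card = q0 + 1) ∧
    (∀ a : F, a ∈ M →
      (Finset.univ.filter fun b : F => b ^ (q0 + 1) = a ^ q0 + a) = {(0 : F)}) ∧
    (Finset.univ.filter fun p : F × F =>
        p.1 ^ q0 + p.1 = p.2 ^ (q0 + 1) ∧ p.1 ∉ M).card = q0 ^ 3 - q0 := by
  obtain ⟨p, k, hp, -, rfl⟩ := hq0
  have : Fact p.Prime := ⟨hp.nat_prime⟩
  have : CharP F p := charP_of_card_eq_prime_pow (f := k * 2) (by rw [hF, pow_mul])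
  have hcardM : #M = p ^ k := hM ▸ card_filter_pow_add_self_eq_zero hF
  have hfiber : ∀ a ∉ M, #{b : F | b ^ (p ^ k + 1) = a ^ p ^ k + a} = p ^ k + 1 := fun a ha =>
    card_filter_pow_succ_eq hF (by simpa [hM] using ha) (frobeniusTrace_pow_eq_self hF a)
  refine ⟨hcardM, hfiber, fun a ha => ?_, ?_⟩
  · have ha0 : a ^ p ^ k + a = 0 := by simpa [hM] using ha
    ext b
    simp [ha0]
  · rw [card_filter_prod_and (fun a b => a ^ p ^ k + a = b ^ (p ^ k + 1)) (· ∉ M)]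
    simp_rw [eq_comm (a := _ ^ p ^ k + _)]
    rw [sum_congr rfl fun a ha => hfiber a (mem_filter.1 ha).2, sum_const, smul_eq_mul,
      filter_notMem_eq_sdiff, card_univ_sdiff, hF, hcardM, Nat.sub_mul]
    ring_nf
    omega
end

section
/- Let q0 ≥ 2 be a prime power and q = q0². Let B = {(a,b) ∈ 𝔽_q × 𝔽_q : a^{q0} + a = b^{q0+1}, b ≠ 0}, let L ⊆ 𝔽_q[x,y] be the 𝔽_q-linear span of the monomials x^i y^j for 0 ≤ i ≤ q0-2 and 0 ≤ j ≤ q0-1, and let C ⊆ 𝔽_q^B be the image of L under the evaluation map F ↦ (F(a,b))_{(a,b) ∈ B}. Then every coordinate P = (a,b) ∈ B has two disjoint recovering sets: I_P = {(a',b) ∈ B : a' ≠ a} of size q0 - 1 and J_P = {(a,b') ∈ B : b' ≠ b} of size q0, i.e., I_P ∩ J_P = ∅ and any two codewords of C that agree on all coordinates in I_P (respectively, on all coordinates in J_P) also agree in coordinate P. -/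
/-!
Both recovering sets of `P = (a, b)` lie on lines through `P`: `I_P` on the row `y = b`, `J_P`
on the column `x = a`. A polynomial of `L` has degree at most `q0 - 2` in `x` and at most
`q0 - 1` in `y`, so on a row it is determined by `q0 - 1` values and on a column by `q0` values.

With `c = b ^ (q0 + 1)`, the row of `P` in `B` is the fibre `x ^ q0 + x = c` and its column is
the fibre `y ^ (q0 + 1) = c`. Since `c ^ q0 = c` and `c ≠ 0`, both polynomials
`X ^ q0 + X - c` and `X ^ (q0 + 1) - c` divide `X ^ q - X`, and a divisor of `X ^ q - X` has as
many roots in `𝔽_q` as its degree. Hence the row has `q0` points and the column `q0 + 1`.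
-/

noncomputable section

/-- The evaluation map sending a bivariate polynomial `G ∈ F[x,y]` to the vector of its
values `(G(a,b))_{(a,b) ∈ S}`. -/
def evalMv {F : Type*} [CommSemiring F] (S : Finset (F × F)) :
    MvPolynomial (Fin 2) F →ₗ[F] (S → F) :=
  LinearMap.pi fun p => (MvPolynomial.aeval ![(p : F × F).1, (p : F × F).2]).toLinearMap

open Polynomial Finset Function

namespace MvPolynomial

variable {σ R : Type*} [CommRing R]

theorem exists_natDegree_le_degreeOf_eval_update [DecidableEq σ] (H : MvPolynomial σ R) (i : σ)
    (v : σ → R) :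
    ∃ f : R[X], f.natDegree ≤ H.degreeOf i ∧ ∀ t, f.eval t = eval (update v i t) H := by
  set e := Equiv.optionSubtypeNe i
  -- `H` as a polynomial in `X i` over the other variables, with the coefficients evaluated at `v`
  refine ⟨(optionEquivLeft R _ (rename e.symm H)).map (eval fun j : {j // j ≠ i} => v j), ?_,
    fun t => ?_⟩
  · rw [degreeOf_eq_natDegree i H]
    exact natDegree_map_le
  · rw [← optionEquivLeft_elim_eval, eval_rename]
    congr 2
    funext j
    by_cases hj : j = i
    · subst hj; simp [e]
    · simp [e, Equiv.optionSubtypeNe_symm_of_ne hj, hj]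

theorem eval_update_eq_zero_of_degreeOf_lt [IsDomain R] [DecidableEq σ] {H : MvPolynomial σ R}
    {i : σ} {v : σ → R} {s : Finset R} (hdeg : H.degreeOf i < #s)
    (hs : ∀ t ∈ s, eval (update v i t) H = 0) (t : R) : eval (update v i t) H = 0 := by
  obtain ⟨f, hf, hfH⟩ := H.exists_natDegree_le_degreeOf_eval_update i v
  have hf0 : f = 0 := f.eq_zero_of_natDegree_lt_card_of_eval_eq_zero' s
    (fun t ht => by rw [hfH, hs t ht]) (hf.trans_lt hdeg)
  rw [← hfH, hf0, Polynomial.eval_zero]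

theorem degreeOf_le_of_mem_span {S : Set (MvPolynomial σ R)} {i : σ} {d : ℕ}
    (hS : ∀ f ∈ S, f.degreeOf i ≤ d) {H : MvPolynomial σ R} (hH : H ∈ Submodule.span R S) :
    H.degreeOf i ≤ d := by
  induction hH using Submodule.span_induction with
  | mem f hf => exact hS f hf
  | zero => simp
  | add f g _ _ hf hg => exact (degreeOf_add_le i f g).trans (max_le hf hg)
  | smul a f _ hf => exact (smul_eq_C_mul f a ▸ degreeOf_C_mul_le f i a).trans hf

end MvPolynomial

namespace FiniteField

variable {F : Type*} [Field F] [Fintype F] {q : ℕ}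

theorem card_filter_eval_eq_zero_of_dvd [DecidableEq F] {f : F[X]}
    (hf : f ∣ X ^ Fintype.card F - X) : #{x | f.eval x = 0} = f.natDegree := by
  obtain ⟨g, hfg⟩ := hf
  have hne : f * g ≠ 0 := hfg ▸ X_pow_card_sub_X_ne_zero F Fintype.one_lt_card
  have hf0 : f ≠ 0 := left_ne_zero_of_mul hne
  have hroots : f.roots + g.roots = univ.val := by
    rw [← roots_mul hne, ← hfg, roots_X_pow_card_sub_X]
  have hdeg : Multiset.card f.roots + Multiset.card g.roots = f.natDegree + g.natDegree := by
    rw [← Multiset.card_add, hroots, ← natDegree_mul hf0 (right_ne_zero_of_mul hne), ← hfg,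
      X_pow_card_sub_X_natDegree_eq F Fintype.one_lt_card]
    rfl
  have hcard : Multiset.card f.roots = f.natDegree := by
    have hf_le := card_roots' f
    have hg_le := card_roots' g
    omega
  have hnodup : f.roots.Nodup :=
    Multiset.nodup_of_le (Multiset.le_add_right _ _) (hroots ▸ univ.nodup)
  rw [← hcard, ← Multiset.toFinset_card_of_nodup hnodup]
  congr 1
  ext x
  simp [mem_roots hf0]

theorem card_filter_pow_add_self_eq [DecidableEq F] (hq : IsPrimePow q)
    (hF : Fintype.card F = q ^ 2) {c : F} (hc : c ^ q = c) : #{x : F | x ^ q + x = c} = q := by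
  obtain ⟨p, k, hp, hk, rfl⟩ := (isPrimePow_nat_iff q).1 hq
  have := Fact.mk hp
  have : CharP F p := charP_of_card_eq_prime_pow (f := k * 2) (by rw [hF, pow_mul])
  set T : F[X] := X ^ p ^ k + X - C c
  -- `T ^ q - T = X ^ (q ^ 2) - X`, since `x ↦ x ^ q` is additive and fixes `c`
  have hT : X ^ Fintype.card F - X = T * (T ^ (p ^ k - 1) - 1) := by
    rw [mul_sub, mul_one, ← pow_succ', Nat.sub_add_cancel (Nat.one_le_pow _ _ hp.pos),
      sub_pow_char_pow, add_pow_char_pow, ← C_pow, hc, hF, sq, ← pow_mul]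
    ring
  have hdeg : T.natDegree = p ^ k := by
    have : 1 < p ^ k := Nat.one_lt_pow hk.ne' hp.one_lt
    rw [natDegree_sub_C, natDegree_add_eq_left_of_natDegree_lt] <;> simp [this]
  calc #{x : F | x ^ p ^ k + x = c} = #{x | T.eval x = 0} := by simp [T, sub_eq_zero]
    _ = p ^ k := hdeg ▸ card_filter_eval_eq_zero_of_dvd ⟨_, hT⟩

theorem card_filter_pow_succ_eq [DecidableEq F] (hF : Fintype.card F = q ^ 2) {c : F}
    (hc : c ^ (q - 1) = 1) : #{y : F | y ^ (q + 1) = c} = q + 1 := by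
  obtain ⟨r, rfl⟩ : ∃ r, q = r + 1 :=
    Nat.exists_eq_succ_of_ne_zero fun h => by simp [h] at hF
  rw [Nat.add_sub_cancel] at hc
  set T : F[X] := X ^ (r + 2) - C c
  have hT : X ^ Fintype.card F - X = X * ((X ^ (r + 2)) ^ r - C c ^ r) := by
    rw [← C_pow, hc, C_1, ← pow_mul, mul_sub, mul_one, ← pow_succ', hF]
    ring
  have hdvd : T ∣ X ^ Fintype.card F - X := hT ▸ (sub_dvd_pow_sub_pow _ _ r).mul_left X
  calc #{y : F | y ^ (r + 1 + 1) = c} = #{y | T.eval y = 0} := by simp [T, sub_eq_zero]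
    _ = r + 1 + 1 := by
      rw [card_filter_eval_eq_zero_of_dvd hdvd, natDegree_sub_C, natDegree_X_pow]

theorem pow_succ_pow_eq_self (hF : Fintype.card F = q ^ 2) (b : F) :
    (b ^ (q + 1)) ^ q = b ^ (q + 1) := by
  rw [← pow_mul, show (q + 1) * q = q ^ 2 + q by ring, pow_add, ← hF, FiniteField.pow_card,
    pow_succ']

theorem pow_succ_pow_pred_eq_one (hF : Fintype.card F = q ^ 2) {b : F} (hb : b ≠ 0) :
    (b ^ (q + 1)) ^ (q - 1) = 1 := by
  rw [← pow_mul, ← Nat.sq_sub_sq, one_pow, ← hF, FiniteField.pow_card_sub_one_eq_one b hb]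

end FiniteField

section PlaneCodes

variable {F : Type*} [Field F] [DecidableEq F]

theorem evalMv_eq_of_eq_on_row {S : Finset (F × F)} {G G' : MvPolynomial (Fin 2) F} (P : S)
    (hdeg : (G - G').degreeOf 0 < #{Q ∈ S | Q.2 = P.1.2 ∧ Q.1 ≠ P.1.1})
    (h : ∀ Q : S, Q.1.2 = P.1.2 → Q.1.1 ≠ P.1.1 → evalMv S G Q = evalMv S G' Q) :
    evalMv S G P = evalMv S G' P := by
  obtain ⟨⟨a, b⟩, hP⟩ := P
  set row := {Q ∈ S | Q.2 = b ∧ Q.1 ≠ a}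
  have hrow : #(row.image Prod.fst) = #row := card_image_of_injOn fun Q hQ Q' hQ' h =>
    Prod.ext h ((mem_filter.1 hQ).2.1.trans (mem_filter.1 hQ').2.1.symm)
  have hupdate (t : F) : update ![a, b] 0 t = ![t, b] := Fin.update_cons_zero ..
  have key := MvPolynomial.eval_update_eq_zero_of_degreeOf_lt (v := ![a, b]) (hrow ▸ hdeg) ?_ a
  · rw [hupdate, map_sub, sub_eq_zero] at key
    exact key
  · rintro _ hx
    obtain ⟨⟨x, y⟩, hQ, rfl⟩ := mem_image.1 hx
    obtain ⟨hQS, rfl, hxa⟩ := mem_filter.1 hQ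
    rw [hupdate, map_sub, sub_eq_zero]
    exact h ⟨(x, y), hQS⟩ rfl hxa

theorem evalMv_eq_of_eq_on_column {S : Finset (F × F)} {G G' : MvPolynomial (Fin 2) F} (P : S)
    (hdeg : (G - G').degreeOf 1 < #{Q ∈ S | Q.1 = P.1.1 ∧ Q.2 ≠ P.1.2})
    (h : ∀ Q : S, Q.1.1 = P.1.1 → Q.1.2 ≠ P.1.2 → evalMv S G Q = evalMv S G' Q) :
    evalMv S G P = evalMv S G' P := by
  obtain ⟨⟨a, b⟩, hP⟩ := P
  set column := {Q ∈ S | Q.1 = a ∧ Q.2 ≠ b}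
  have hcolumn : #(column.image Prod.snd) = #column := card_image_of_injOn fun Q hQ Q' hQ' h =>
    Prod.ext ((mem_filter.1 hQ).2.1.trans (mem_filter.1 hQ').2.1.symm) h
  have hupdate (t : F) : update ![a, b] 1 t = ![a, t] := by
    funext j
    fin_cases j <;> rfl
  have key := MvPolynomial.eval_update_eq_zero_of_degreeOf_lt (v := ![a, b]) (hcolumn ▸ hdeg) ?_ b
  · rw [hupdate, map_sub, sub_eq_zero] at key
    exact key
  · rintro _ hy
    obtain ⟨⟨x, y⟩, hQ, rfl⟩ := mem_image.1 hy
    obtain ⟨hQS, rfl, hyb⟩ := mem_filter.1 hQ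
    rw [hupdate, map_sub, sub_eq_zero]
    exact h ⟨(x, y), hQS⟩ rfl hyb

end PlaneCodes

section Hermitian

variable (F : Type*) [Field F] (q0 : ℕ)

def hermitianSpace : Submodule F (MvPolynomial (Fin 2) F) :=
  Submodule.span F {p | ∃ i j : ℕ, i ≤ q0 - 2 ∧ j ≤ q0 - 1 ∧
    p = MvPolynomial.X 0 ^ i * MvPolynomial.X 1 ^ j}

variable {F q0}

theorem degreeOf_zero_le_of_mem_hermitianSpace {H : MvPolynomial (Fin 2) F}
    (hH : H ∈ hermitianSpace F q0) : H.degreeOf 0 ≤ q0 - 2 := by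
  refine MvPolynomial.degreeOf_le_of_mem_span ?_ hH
  rintro _ ⟨i, j, hi, -, rfl⟩
  rwa [MvPolynomial.degreeOf_mul_X_pow_of_ne _ Fin.zero_ne_one, MvPolynomial.degreeOf_X_self_pow]

theorem degreeOf_one_le_of_mem_hermitianSpace {H : MvPolynomial (Fin 2) F}
    (hH : H ∈ hermitianSpace F q0) : H.degreeOf 1 ≤ q0 - 1 := by
  refine MvPolynomial.degreeOf_le_of_mem_span ?_ hH
  rintro _ ⟨i, j, -, hj, rfl⟩
  refine (MvPolynomial.degreeOf_mul_le _ _ _).trans ?_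
  rwa [MvPolynomial.degreeOf_X_pow_of_ne _ Fin.zero_ne_one.symm, MvPolynomial.degreeOf_X_self_pow,
    zero_add]

variable (F q0) [Fintype F] [DecidableEq F]

def hermitianPoints : Finset (F × F) :=
  {p | p.1 ^ q0 + p.1 = p.2 ^ (q0 + 1) ∧ p.2 ≠ 0}

variable {F q0}

theorem card_hermitianPoints_row (hq0 : IsPrimePow q0) (hF : Fintype.card F = q0 ^ 2)
    (P : hermitianPoints F q0) :
    #{Q ∈ hermitianPoints F q0 | Q.2 = P.1.2 ∧ Q.1 ≠ P.1.1} = q0 - 1 := by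
  obtain ⟨⟨a, b⟩, hP⟩ := P
  obtain ⟨hab, hb⟩ : a ^ q0 + a = b ^ (q0 + 1) ∧ b ≠ 0 := by simpa [hermitianPoints] using hP
  have hrow : {Q ∈ hermitianPoints F q0 | Q.2 = b ∧ Q.1 ≠ a} =
      (({x | x ^ q0 + x = b ^ (q0 + 1)} : Finset F).erase a).map (Embedding.sectL F b) := by
    ext ⟨x, y⟩
    simp only [ne_eq, hermitianPoints, mem_filter, mem_univ, true_and, map_erase,
      Embedding.sectL_apply, mem_erase, Prod.mk.injEq, not_and, mem_map, ↓existsAndEq]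
    constructor
    · rintro ⟨⟨hx, -⟩, rfl, hxa⟩
      exact ⟨fun h => absurd h hxa, hx, rfl⟩
    · rintro ⟨hne, hx, rfl⟩
      exact ⟨⟨hx, hb⟩, rfl, fun h => hne h rfl⟩
  rw [hrow, card_map, card_erase_of_mem (by simpa using hab),
    FiniteField.card_filter_pow_add_self_eq hq0 hF (FiniteField.pow_succ_pow_eq_self hF b)]

theorem card_hermitianPoints_column (hF : Fintype.card F = q0 ^ 2) (P : hermitianPoints F q0) :
    #{Q ∈ hermitianPoints F q0 | Q.1 = P.1.1 ∧ Q.2 ≠ P.1.2} = q0 := by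
  obtain ⟨⟨a, b⟩, hP⟩ := P
  obtain ⟨hab, hb⟩ : a ^ q0 + a = b ^ (q0 + 1) ∧ b ≠ 0 := by simpa [hermitianPoints] using hP
  have hcolumn : {Q ∈ hermitianPoints F q0 | Q.1 = a ∧ Q.2 ≠ b} =
      (({y | y ^ (q0 + 1) = b ^ (q0 + 1)} : Finset F).erase b).map (Embedding.sectR a F) := by
    ext ⟨x, y⟩
    simp only [ne_eq, hermitianPoints, mem_filter, mem_univ, true_and, map_erase,
      Embedding.sectR_apply, mem_erase, Prod.mk.injEq, not_and, mem_map, exists_eq_right_right]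
    constructor
    · rintro ⟨⟨hxy, -⟩, rfl, hyb⟩
      exact ⟨fun _ => hyb, by rw [← hxy, hab], rfl⟩
    · rintro ⟨hne, hy, rfl⟩
      refine ⟨⟨by rw [hab, hy], fun hy0 => hb ?_⟩, rfl, hne rfl⟩
      rw [hy0, zero_pow (Nat.succ_ne_zero q0)] at hy
      exact (pow_eq_zero_iff (Nat.succ_ne_zero q0)).1 hy.symm
  rw [hcolumn, card_map, card_erase_of_mem (by simp),
    FiniteField.card_filter_pow_succ_eq hF
      (FiniteField.pow_succ_pow_pred_eq_one hF hb), Nat.add_sub_cancel]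

end Hermitian

theorem hermitian_lrc2_two_recovering_sets_general
    (q0 : ℕ) (hq0 : IsPrimePow q0)
    (F : Type*) [Field F] [Fintype F] [DecidableEq F] (hF : Fintype.card F = q0 ^ 2)
    (B : Finset (F × F))
    (hB : B = Finset.univ.filter fun p : F × F =>
      p.1 ^ q0 + p.1 = p.2 ^ (q0 + 1) ∧ p.2 ≠ 0)
    (L : Submodule F (MvPolynomial (Fin 2) F))
    (hL : L = Submodule.span F
      {p : MvPolynomial (Fin 2) F | ∃ i j : ℕ, i ≤ q0 - 2 ∧ j ≤ q0 - 1 ∧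
        p = MvPolynomial.X 0 ^ i * MvPolynomial.X 1 ^ j})
    (C : Submodule F (B → F)) (hC : C = Submodule.map (evalMv B) L) :
    ∀ P : B,
      (B.filter fun p : F × F => p.2 = (P : F × F).2 ∧ p.1 ≠ (P : F × F).1).card = q0 - 1 ∧
      (B.filter fun p : F × F => p.1 = (P : F × F).1 ∧ p.2 ≠ (P : F × F).2).card = q0 ∧
      Disjoint
        (B.filter fun p : F × F => p.2 = (P : F × F).2 ∧ p.1 ≠ (P : F × F).1)
        (B.filter fun p : F × F => p.1 = (P : F × F).1 ∧ p.2 ≠ (P : F × F).2) ∧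
      (∀ c ∈ C, ∀ c' ∈ C,
        (∀ Q : B, (Q : F × F).2 = (P : F × F).2 → (Q : F × F).1 ≠ (P : F × F).1 →
          c Q = c' Q) → c P = c' P) ∧
      (∀ c ∈ C, ∀ c' ∈ C,
        (∀ Q : B, (Q : F × F).1 = (P : F × F).1 → (Q : F × F).2 ≠ (P : F × F).2 →
          c Q = c' Q) → c P = c' P) := by
  obtain rfl : B = hermitianPoints F q0 := hB
  obtain rfl : L = hermitianSpace F q0 := hL
  subst hC
  intro P
  have hrow := card_hermitianPoints_row hq0 hF P
  have hcolumn := card_hermitianPoints_column hF P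
  have hq0_two := hq0.two_le
  refine ⟨hrow, hcolumn, disjoint_filter.2 fun _ _ h₁ h₂ => h₁.2 h₂.1, ?_, ?_⟩
  · rintro _ ⟨G, hG, rfl⟩ _ ⟨G', hG', rfl⟩
    refine evalMv_eq_of_eq_on_row P ?_
    have hdeg := degreeOf_zero_le_of_mem_hermitianSpace (sub_mem hG hG')
    omega
  · rintro _ ⟨G, hG, rfl⟩ _ ⟨G', hG', rfl⟩
    refine evalMv_eq_of_eq_on_column P ?_
    have hdeg := degreeOf_one_le_of_mem_hermitianSpace (sub_mem hG hG')
    omega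

/-- The Hermitian LRC(2) code has, for every coordinate `P = (a,b) ∈ B`, two disjoint
recovering sets: `I_P = {(a',b) ∈ B : a' ≠ a}` of size `q0 - 1` and
`J_P = {(a,b') ∈ B : b' ≠ b}` of size `q0`. -/
theorem hermitian_lrc2_two_recovering_sets
    (q0 : ℕ) (hq0 : IsPrimePow q0) (hq0' : 2 ≤ q0)
    (F : Type*) [Field F] [Fintype F] [DecidableEq F] (hF : Fintype.card F = q0 ^ 2)
    (B : Finset (F × F))
    (hB : B = Finset.univ.filter fun p : F × F =>
      p.1 ^ q0 + p.1 = p.2 ^ (q0 + 1) ∧ p.2 ≠ 0)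
    (L : Submodule F (MvPolynomial (Fin 2) F))
    (hL : L = Submodule.span F
      {p : MvPolynomial (Fin 2) F | ∃ i j : ℕ, i ≤ q0 - 2 ∧ j ≤ q0 - 1 ∧
        p = MvPolynomial.X 0 ^ i * MvPolynomial.X 1 ^ j})
    (C : Submodule F (B → F)) (hC : C = Submodule.map (evalMv B) L) :
    ∀ P : B,
      (B.filter fun p : F × F => p.2 = (P : F × F).2 ∧ p.1 ≠ (P : F × F).1).card = q0 - 1 ∧
      (B.filter fun p : F × F => p.1 = (P : F × F).1 ∧ p.2 ≠ (P : F × F).2).card = q0 ∧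
      Disjoint
        (B.filter fun p : F × F => p.2 = (P : F × F).2 ∧ p.1 ≠ (P : F × F).1)
        (B.filter fun p : F × F => p.1 = (P : F × F).1 ∧ p.2 ≠ (P : F × F).2) ∧
      (∀ c ∈ C, ∀ c' ∈ C,
        (∀ Q : B, (Q : F × F).2 = (P : F × F).2 → (Q : F × F).1 ≠ (P : F × F).1 →
          c Q = c' Q) → c P = c' P) ∧
      (∀ c ∈ C, ∀ c' ∈ C,
        (∀ Q : B, (Q : F × F).1 = (P : F × F).1 → (Q : F × F).2 ≠ (P : F × F).2 →
          c Q = c' Q) → c P = c' P) :=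
  hermitian_lrc2_two_recovering_sets_general q0 hq0 F hF B hB L hL C hC
end
end
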